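/- Let R be a relation on a finite set V, with unrolled graph on ℤ × V having edges from (t−1, i) to (t, j) exactly when R i j. For every u ≥ 2, every t ∈ ℤ, and all distinct i, j ∈ V: there exists a vertex (s, c) of the unrolled graph with t − u < s < t that has directed paths to both (t, i) and (t, j), if and only if there exist c ∈ V and k with 1 ≤ k < u such that R has a walk of length k from c to i and a walk of length k from c to j. (This is Equation (2): the bidirected edges of G^u arise from common causes within the marginalized time window, with paths of the same length on each arm.) -/

import Mathlib

/-- A walk of length `k` from `i` to `j` in the digraph `R` is a function
`p : Fin (k+1) → V` with `p 0 = i`, `p k = j`, and `R (p m) (p (m+1))` for all `m < k`. -/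
def IsWalk {V : Type*} (R : V → V → Prop) (k : ℕ) (i j : V) (p : Fin (k + 1) → V) : Prop :=
  p 0 = i ∧ p (Fin.last k) = j ∧ ∀ m : Fin k, R (p m.castSucc) (p m.succ)

/-- There exists a walk of length `k` from `i` to `j` in `R`. -/
def HasWalk {V : Type*} (R : V → V → Prop) (k : ℕ) (i j : V) : Prop :=
  ∃ p : Fin (k + 1) → V, IsWalk R k i j p

/-- The edge relation of the unrolled graph of `R` on `ℤ × V`: there is an edge from
`(t-1, i)` to `(t, j)` exactly when `R i j`. -/
def UnrolledEdge {V : Type*} (R : V → V → Prop) (a b : ℤ × V) : Prop :=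
  b.1 = a.1 + 1 ∧ R a.2 b.2

/-!
Every edge of the unrolled graph advances time by exactly one, so a walk of length `k` in it is
the same thing as a walk of length `k` in `R` together with a time shift of `k`. A common cause
`(s, c)` of `(t, i)` and `(t, j)` therefore reaches both along walks of the same length
`t - s`, and the window `t - u < s < t` becomes `1 ≤ t - s < u`.
-/

section Unrolled

variable {V : Type*} {R : V → V → Prop} {k : ℕ}

lemma IsWalk.unrolled_fst {a b : ℤ × V} {p : Fin (k + 1) → ℤ × V}
    (hp : IsWalk (UnrolledEdge R) k a b p) (m : Fin (k + 1)) : (p m).1 = a.1 + m := by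
  obtain ⟨h0, -, hstep⟩ := hp
  induction m using Fin.induction with
  | zero => simp [h0]
  | succ m ih =>
    rw [(hstep m).1, ih, Fin.val_castSucc, Fin.val_succ]
    push_cast
    ring

lemma HasWalk.of_unrolled {a b : ℤ × V} (h : HasWalk (UnrolledEdge R) k a b) :
    b.1 = a.1 + k ∧ HasWalk R k a.2 b.2 := by
  obtain ⟨p, hp⟩ := h
  refine ⟨?_, fun m => (p m).2, by simp [hp.1], by simp [hp.2.1], fun m => (hp.2.2 m).2⟩
  simpa [hp.2.1] using hp.unrolled_fst (Fin.last k)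

lemma HasWalk.unrolled {c i : V} (h : HasWalk R k c i) (s : ℤ) :
    HasWalk (UnrolledEdge R) k (s, c) (s + k, i) := by
  obtain ⟨q, h0, hlast, hstep⟩ := h
  refine ⟨fun m => (s + m, q m), by simp [h0], by simp [hlast], fun m => ⟨?_, hstep m⟩⟩
  simp only [Fin.val_castSucc, Fin.val_succ]
  push_cast
  ring

theorem hasWalk_unrolledEdge_iff {a b : ℤ × V} :
    HasWalk (UnrolledEdge R) k a b ↔ b.1 = a.1 + k ∧ HasWalk R k a.2 b.2 := by
  refine ⟨HasWalk.of_unrolled, fun ⟨htime, h⟩ => ?_⟩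
  obtain ⟨s, c⟩ := a
  obtain ⟨t, i⟩ := b
  obtain rfl : t = s + k := htime
  exact h.unrolled s

end Unrolled

theorem unrolled_common_cause_iff_general {V : Type*} (R : V → V → Prop)
    (u : ℕ) (t : ℤ) (i j : V) :
    (∃ (s : ℤ) (c : V), t - (u : ℤ) < s ∧ s < t ∧
        (∃ k : ℕ, 1 ≤ k ∧ HasWalk (UnrolledEdge R) k (s, c) (t, i)) ∧
        (∃ k : ℕ, 1 ≤ k ∧ HasWalk (UnrolledEdge R) k (s, c) (t, j))) ↔
      (∃ (c : V) (k : ℕ), 1 ≤ k ∧ k < u ∧ HasWalk R k c i ∧ HasWalk R k c j) := by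
  simp only [hasWalk_unrolledEdge_iff]
  constructor
  · rintro ⟨s, c, hlow, hhigh, ⟨k, hk, hti, hci⟩, ⟨k', -, htj, hcj⟩⟩
    obtain rfl : k = k' := by omega
    exact ⟨c, k, hk, by omega, hci, hcj⟩
  · rintro ⟨c, k, hk, hku, hci, hcj⟩
    exact ⟨t - k, c, by omega, by omega, ⟨k, hk, by simp, hci⟩, ⟨k, hk, by simp, hcj⟩⟩

/-- Equation (2): for `u ≥ 2` and distinct `i, j`, there is a common-cause vertex
`(s, c)` of the unrolled graph, with `t - u < s < t`, having directed paths to both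
`(t, i)` and `(t, j)`, iff there exist `c` and `k` with `1 ≤ k < u` such that `R` has
walks of length `k` from `c` to `i` and from `c` to `j`. -/
theorem unrolled_common_cause_iff {V : Type*} [Fintype V] (R : V → V → Prop)
    (u : ℕ) (hu : 2 ≤ u) (t : ℤ) (i j : V) (hij : i ≠ j) :
    (∃ (s : ℤ) (c : V), t - (u : ℤ) < s ∧ s < t ∧
        (∃ k : ℕ, 1 ≤ k ∧ HasWalk (UnrolledEdge R) k (s, c) (t, i)) ∧
        (∃ k : ℕ, 1 ≤ k ∧ HasWalk (UnrolledEdge R) k (s, c) (t, j))) ↔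
      (∃ (c : V) (k : ℕ), 1 ≤ k ∧ k < u ∧ HasWalk R k c i ∧ HasWalk R k c j) :=
  unrolled_common_cause_iff_general R u t i j
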